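/- Let Γ be a group acting on the inverse limit X_∞ of coset spaces of a group chain {Γ_ℓ} with all relative indices [Γ_{ℓ-1} : Γ_ℓ] = d for a fixed d ≥ 2. Then for every γ ∈ Γ, every prime p in the prime spectrum of the Steinitz order ξ(γ) = lcm{ #(⟨γ⟩/(⟨γ⟩ ∩ C_ℓ)) : ℓ > 0 } divides lcm{2, 3, …, d}; hence the number of distinct types of elements of Γ is at most 2^{N_d}, where N_d is the number of primes ≤ d. -/

import Mathlib

/-- A Steinitz number, encoded by its characteristic function on the primes. -/
abbrev SteinitzNum := Nat.Primes → ℕ∞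

/-- Asymptotic equivalence of Steinitz numbers. -/
def steinitzEquiv (χ₁ χ₂ : SteinitzNum) : Prop :=
  ∃ m m' : ℕ, 0 < m ∧ 0 < m' ∧
    ∀ p : Nat.Primes, (m.factorization p : ℕ∞) + χ₁ p = (m'.factorization p : ℕ∞) + χ₂ p

/-- The Steinitz number `lcm {f ℓ : ℓ}` of a sequence of natural numbers. -/
noncomputable def steinitzOfSeq (f : ℕ → ℕ) : SteinitzNum :=
  fun p => ⨆ ℓ : ℕ, ((f ℓ).factorization p : ℕ∞)

/-- The Steinitz order `ξ(γ) = lcm { #(⟨γ⟩/(⟨γ⟩ ∩ C_ℓ)) : ℓ }` of `γ` along the chain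
of normal cores `C_ℓ` of the `Γ_ℓ`. -/
noncomputable def steinitzOrder {G : Type*} [Group G] (Γ : ℕ → Subgroup G) (γ : G) :
    SteinitzNum :=
  steinitzOfSeq fun ℓ => ((Γ ℓ).normalCore.subgroupOf (Subgroup.zpowers γ)).index

/-!
If `[H : K] = n` is finite, then for every `δ ∈ H` the cyclic group `⟨δ⟩` meets `K` in a subgroup
of index at most `n`, so `δ ^ n! ∈ K`. Applied to the conjugates of `γ ^ a`, where
`a = [⟨γ⟩ : ⟨γ⟩ ∩ C_ℓ]`, this gives `[⟨γ⟩ : ⟨γ⟩ ∩ C_{ℓ+1}] ∣ a * d!`, hence every term of the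
sequence defining `ξ(γ)` divides a power of `d!` and only primes `≤ d` occur in `ξ(γ)`.
A Steinitz number supported on a finite set of primes differs by a finite factor from the one
with exponent `∞` exactly where its own exponent is infinite and `0` elsewhere, and there are
at most `2 ^ N_d` of the latter.
-/

open Subgroup Nat

section Chain

variable {G : Type*} [Group G]

theorem pow_mem_iff_relIndex_zpowers_dvd (H : Subgroup G) (γ : G) (m : ℕ) :
    γ ^ m ∈ H ↔ H.relIndex (zpowers γ) ∣ m := by
  let g : zpowers γ := ⟨γ, mem_zpowers γ⟩
  let q : zpowers γ ⧸ H.subgroupOf (zpowers γ) := g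
  have hq : orderOf q = H.relIndex (zpowers γ) := by
    refine orderOf_eq_card_of_forall_mem_zpowers fun x => ?_
    obtain ⟨⟨_, k, rfl⟩, rfl⟩ := QuotientGroup.mk_surjective x
    exact ⟨k, rfl⟩
  rw [← hq, orderOf_dvd_iff_pow_eq_one, ← QuotientGroup.mk_pow, QuotientGroup.eq_one_iff,
    mem_subgroupOf]
  rfl

theorem pow_factorial_relIndex_mem {H K : Subgroup G} {δ : G} (hδ : δ ∈ H)
    (hK : K.relIndex H ≠ 0) : δ ^ (K.relIndex H)! ∈ K := by
  have hle : zpowers δ ≤ H := zpowers_le.mpr hδ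
  rw [pow_mem_iff_relIndex_zpowers_dvd]
  refine Nat.dvd_factorial (Nat.pos_of_ne_zero fun h => hK ?_) (relIndex_le_of_le_right hle hK)
  exact relIndex_eq_zero_of_le_right hle h

theorem relIndex_normalCore_zpowers_dvd_mul_factorial (H K : Subgroup G)
    (hK : K.relIndex H ≠ 0) (γ : G) :
    K.normalCore.relIndex (zpowers γ) ∣
      H.normalCore.relIndex (zpowers γ) * (K.relIndex H)! := by
  set a := H.normalCore.relIndex (zpowers γ)
  have hγ : γ ^ a ∈ H.normalCore := (pow_mem_iff_relIndex_zpowers_dvd _ γ a).mpr dvd_rfl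
  rw [← pow_mem_iff_relIndex_zpowers_dvd]
  intro b
  rw [pow_mul, ← conj_pow]
  exact pow_factorial_relIndex_mem (H.normalCore_le ((normalCore_normal H).conj_mem _ hγ b)) hK

theorem relIndex_normalCore_zpowers_dvd_factorial_pow {d : ℕ} (hd : d ≠ 0)
    {Γ : ℕ → Subgroup G} (h0 : Γ 0 = ⊤) (hreg : ∀ ℓ, (Γ (ℓ + 1)).relIndex (Γ ℓ) = d)
    (γ : G) (ℓ : ℕ) : (Γ ℓ).normalCore.relIndex (zpowers γ) ∣ d ! ^ ℓ := by
  induction ℓ with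
  | zero => simp [h0, normalCore_eq_self]
  | succ ℓ ih =>
    calc (Γ (ℓ + 1)).normalCore.relIndex (zpowers γ)
        ∣ (Γ ℓ).normalCore.relIndex (zpowers γ) * d ! := by
          simpa [hreg ℓ] using
            relIndex_normalCore_zpowers_dvd_mul_factorial (Γ ℓ) (Γ (ℓ + 1)) (hreg ℓ ▸ hd) γ
      _ ∣ d ! ^ (ℓ + 1) := pow_succ (d !) ℓ ▸ mul_dvd_mul_right ih _

end Chain

theorem exists_dvd_of_steinitzOfSeq_ne_zero {f : ℕ → ℕ} {p : Nat.Primes}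
    (h : steinitzOfSeq f p ≠ 0) : ∃ ℓ, (p : ℕ) ∣ f ℓ := by
  contrapose! h
  simp [steinitzOfSeq, Nat.factorization_eq_zero_of_not_dvd (h _)]

def steinitzIndicator (S : Finset ℕ) : SteinitzNum := fun p => if (p : ℕ) ∈ S then ⊤ else 0

theorem Nat.factorization_prod_pow_apply {S : Finset ℕ} (hS : ∀ q ∈ S, q.Prime) (e : ℕ → ℕ)
    (p : ℕ) : (∏ q ∈ S, q ^ e q).factorization p = if p ∈ S then e p else 0 := by
  rw [Nat.factorization_prod fun q hq => pow_ne_zero _ (hS q hq).ne_zero,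
    Finsupp.finsetSum_apply, Finset.sum_congr rfl fun q hq => by
      rw [(hS q hq).factorization_pow, Finsupp.single_apply]]
  simp

theorem exists_steinitzEquiv_indicator {χ : SteinitzNum} {S : Finset ℕ}
    (hS : ∀ q ∈ S, q.Prime) (hχ : ∀ p, χ p ≠ 0 → (p : ℕ) ∈ S) :
    ∃ S' ⊆ S, steinitzEquiv χ (steinitzIndicator S') := by
  classical
  let χ' (q : ℕ) : ℕ∞ := if hq : q.Prime then χ ⟨q, hq⟩ else 0
  have hχ' (p : Nat.Primes) : χ' p = χ p := dif_pos p.2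
  refine ⟨S.filter (χ' · = ⊤), Finset.filter_subset _ _, 1, ∏ q ∈ S, q ^ (χ' q).toNat, one_pos,
    Finset.prod_pos fun q hq => pow_pos (hS q hq).pos _, fun p => ?_⟩
  simp only [Nat.factorization_one, Finsupp.coe_zero, Pi.zero_apply, Nat.cast_zero, zero_add,
    Nat.factorization_prod_pow_apply hS, steinitzIndicator, Finset.mem_filter, hχ']
  by_cases hp : (p : ℕ) ∈ S
  · by_cases htop : χ p = ⊤
    · simp [hp, htop]
    · simp [hp, htop, ENat.natCast_toNat htop]
  · have : χ p = 0 := by_contra fun h => hp (hχ p h)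
    simp [hp, this]

theorem le_of_steinitzOrder_ne_zero {G : Type*} [Group G] {d : ℕ} (hd : d ≠ 0)
    {Γ : ℕ → Subgroup G} (h0 : Γ 0 = ⊤) (hreg : ∀ ℓ, (Γ (ℓ + 1)).relIndex (Γ ℓ) = d)
    {γ : G} {p : Nat.Primes} (hp : steinitzOrder Γ γ p ≠ 0) : (p : ℕ) ≤ d := by
  obtain ⟨ℓ, hℓ⟩ := exists_dvd_of_steinitzOfSeq_ne_zero hp
  exact p.2.dvd_factorial.mp <| p.2.dvd_of_dvd_pow <|
    hℓ.trans (relIndex_normalCore_zpowers_dvd_factorial_pow hd h0 hreg γ ℓ)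

theorem dRegular_typeset_finite_general {G : Type*} [Group G] (d : ℕ) (hd : 2 ≤ d)
    (Γ : ℕ → Subgroup G) (h0 : Γ 0 = ⊤)
    (hreg : ∀ ℓ, ((Γ (ℓ + 1)).subgroupOf (Γ ℓ)).index = d) :
    (∀ γ : G, ∀ p : Nat.Primes, steinitzOrder Γ γ p ≠ 0 →
        (p : ℕ) ∣ (Finset.Icc 2 d).lcm id) ∧
    ∃ T : Set SteinitzNum, T.Finite ∧
      Nat.card T ≤ 2 ^ ((Finset.Icc 2 d).filter Nat.Prime).card ∧
      ∀ γ : G, ∃ χ ∈ T, steinitzEquiv (steinitzOrder Γ γ) χ := by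
  classical
  have hle {γ : G} {p : Nat.Primes} (hp : steinitzOrder Γ γ p ≠ 0) : (p : ℕ) ≤ d :=
    le_of_steinitzOrder_ne_zero (by omega) h0 hreg hp
  refine ⟨fun γ p hp => Finset.dvd_lcm (Finset.mem_Icc.mpr ⟨p.2.two_le, hle hp⟩), ?_⟩
  set N := (Finset.Icc 2 d).filter Nat.Prime
  refine ⟨N.powerset.image steinitzIndicator, Finset.finite_toSet _, ?_, fun γ => ?_⟩
  · rw [Nat.card_coe_set_eq, Set.ncard_coe_finset, ← Finset.card_powerset]
    exact Finset.card_image_le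
  · obtain ⟨S, hSN, hequiv⟩ := exists_steinitzEquiv_indicator (χ := steinitzOrder Γ γ)
      (fun q hq => (Finset.mem_filter.mp hq).2)
      (fun p hp => Finset.mem_filter.mpr ⟨Finset.mem_Icc.mpr ⟨p.2.two_le, hle hp⟩, p.2⟩)
    exact ⟨_, Finset.mem_image_of_mem _ (Finset.mem_powerset.mpr hSN), hequiv⟩

/-- For a `d`-regular group chain (all relative indices `[Γ_ℓ : Γ_{ℓ+1}] = d`), every
prime in the prime spectrum of the Steinitz order `ξ(γ)` of any `γ ∈ Γ` divides
`lcm {2, …, d}`; hence the number of distinct types of elements of `Γ` is at most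
`2^{N_d}`, where `N_d` is the number of primes `≤ d`. -/
theorem dRegular_typeset_finite {G : Type*} [Group G] (d : ℕ) (hd : 2 ≤ d)
    (Γ : ℕ → Subgroup G) (h0 : Γ 0 = ⊤) (hdesc : ∀ ℓ, Γ (ℓ + 1) ≤ Γ ℓ)
    (hreg : ∀ ℓ, ((Γ (ℓ + 1)).subgroupOf (Γ ℓ)).index = d) :
    (∀ γ : G, ∀ p : Nat.Primes, steinitzOrder Γ γ p ≠ 0 →
        (p : ℕ) ∣ (Finset.Icc 2 d).lcm id) ∧
    ∃ T : Set SteinitzNum, T.Finite ∧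
      Nat.card T ≤ 2 ^ ((Finset.Icc 2 d).filter Nat.Prime).card ∧
      ∀ γ : G, ∃ χ ∈ T, steinitzEquiv (steinitzOrder Γ γ) χ :=
  dRegular_typeset_finite_general d hd Γ h0 hreg
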